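/- Let μ be a partition. For u = (i,j) ∈ dg(μ) define L(u) = t^{leg(u)+1} q^{j−1} if i ≠ 1, and L(u) = q^{arm(u)} if i = 1. Then Σ_{u ∈ dg(μ)} L(u) = Σ_{(i,j) ∈ dg(μ)} t^{i−1} q^{j−1}, as polynomials in q and t. -/

import Mathlib

open Finset MvPolynomial

namespace HHL

/-! ### Diagrams, fillings and the statistics `inv` and `maj` -/

/-- The cells of the Young diagram of the partition `μ` (given as the list of
its row lengths `μ_1, μ_2, …`); the cell `(i,j)` lies in row `i` (from the
bottom, French style) and column `j`, with `1 ≤ i ≤ ℓ(μ)`, `1 ≤ j ≤ μ_i`. -/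
def cells (μ : List ℕ) : Finset (ℕ × ℕ) :=
  (Finset.Icc 1 μ.length ×ˢ Finset.Icc 1 (μ.foldr max 0)).filter
    (fun u => u.2 ≤ μ.getD (u.1 - 1) 0)

/-- `μ` is a partition: a weakly decreasing list of positive integers. -/
def IsPartitionList (μ : List ℕ) : Prop := μ.Pairwise (· ≥ ·) ∧ ∀ x ∈ μ, 0 < x

/-- The arm of a cell: the number of cells strictly to its right in its row. -/
def arm (μ : List ℕ) (u : ℕ × ℕ) : ℕ :=
  ((cells μ).filter (fun v => v.1 = u.1 ∧ u.2 < v.2)).card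

/-- The leg of a cell: the number of cells strictly above it in its column. -/
def leg (μ : List ℕ) (u : ℕ × ℕ) : ℕ :=
  ((cells μ).filter (fun v => v.2 = u.2 ∧ u.1 < v.1)).card

/-- `u` precedes `v` in the reading order (row by row from the top row down,
left to right within each row). -/
def ReadBefore (u v : ℕ × ℕ) : Prop := v.1 < u.1 ∨ (u.1 = v.1 ∧ u.2 < v.2)

instance (u v : ℕ × ℕ) : Decidable (ReadBefore u v) := by
  unfold ReadBefore; infer_instance

/-- `u` and `v` attack each other and `u` precedes `v` in reading order: either
they are in the same row with `u` to the left, or `u` is one row above `v` and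
strictly to its right. -/
def AttackOrd (u v : ℕ × ℕ) : Prop :=
  (u.1 = v.1 ∧ u.2 < v.2) ∨ (u.1 = v.1 + 1 ∧ v.2 < u.2)

instance (u v : ℕ × ℕ) : Decidable (AttackOrd u v) := by
  unfold AttackOrd; infer_instance

/-- `u` and `v` attack each other. -/
def Attack (u v : ℕ × ℕ) : Prop := AttackOrd u v ∨ AttackOrd v u

instance (u v : ℕ × ℕ) : Decidable (Attack u v) := by
  unfold Attack; infer_instance

section Stats

variable {V : Type} (μ : List ℕ) (Ind : V → V → Prop) [DecidableRel Ind] (σ : ℕ × ℕ → V)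

/-- The set `Inv(σ)` of inversions of a filling `σ`, recorded as ordered pairs
`(u,v)` with `u` attacking `v`, `u` preceding `v` in reading order, and
`I(σ(u),σ(v)) = 1`; here `Ind x y` means `I(x,y) = 1` (for ordinary fillings
`Ind x y ↔ x > y`). -/
def invPairs : Finset ((ℕ × ℕ) × (ℕ × ℕ)) :=
  ((cells μ) ×ˢ (cells μ)).filter fun p => AttackOrd p.1 p.2 ∧ Ind (σ p.1) (σ p.2)

/-- The descent set `Des(σ)`: cells `u = (i+1,j)` with `v = (i,j) ∈ dg(μ)` and
`I(σ(u),σ(v)) = 1`. -/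
def desCells : Finset (ℕ × ℕ) :=
  (cells μ).filter fun u => (u.1 - 1, u.2) ∈ cells μ ∧ Ind (σ u) (σ (u.1 - 1, u.2))

/-- `maj(σ) = Σ_{u ∈ Des(σ)} (leg(u) + 1)`. -/
def majStat : ℕ := ∑ u ∈ desCells μ Ind σ, (leg μ u + 1)

/-- `inv(σ) = |Inv(σ)| − Σ_{u ∈ Des(σ)} arm(u)`. -/
def invStat : ℕ := (invPairs μ Ind σ).card - ∑ u ∈ desCells μ Ind σ, arm μ u

end Stats

/-- For ordinary (positive-integer valued) fillings, `I(x,y) = 1` iff `x > y`. -/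
def natInd : ℕ → ℕ → Prop := fun x y => y < x

instance : DecidableRel natInd := fun _ _ => by unfold natInd; infer_instance

/-- Extend a function defined on the cells of `μ` to a total function. -/
def extendF {V : Type} (μ : List ℕ) (d : V) (f : {u // u ∈ cells μ} → V) : ℕ × ℕ → V :=
  fun u => if h : u ∈ cells μ then f ⟨u, h⟩ else d

/-- A filling of `dg(μ)` with entries in `{1, …, N}`, encoded by a function to
`Fin N` (value `k` means the entry `k + 1`), as a total function `ℕ × ℕ → ℕ`. -/
def natFill (μ : List ℕ) {N : ℕ} (f : {u // u ∈ cells μ} → Fin N) : ℕ × ℕ → ℕ :=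
  extendF μ 0 fun u => (f u).val + 1

/-- Haglund's combinatorial formula
`C_μ(x_1,…,x_N;q,t) = Σ_σ q^{inv(σ)} t^{maj(σ)} x^σ`, a polynomial in
`x_1,…,x_N` with coefficients in `ℤ[q,t]`, where `q = C (X 0)`, `t = C (X 1)`. -/
noncomputable def Cmu (μ : List ℕ) (N : ℕ) :
    MvPolynomial (Fin N) (MvPolynomial (Fin 2) ℤ) :=
  ∑ f : {u // u ∈ cells μ} → Fin N,
    C ((X 0 : MvPolynomial (Fin 2) ℤ) ^ invStat μ natInd (natFill μ f) *
       (X 1 : MvPolynomial (Fin 2) ℤ) ^ majStat μ natInd (natFill μ f)) *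
    ∏ u, X (f u)

/-! ### Skew diagrams and LLT polynomials -/

/-- A pair of partitions `(λ, μ)` with `μ ⊆ λ`, representing the skew diagram
`λ∖μ`. -/
def IsSkewPair (p : List ℕ × List ℕ) : Prop :=
  IsPartitionList p.1 ∧ IsPartitionList p.2 ∧ ∀ i, p.2.getD i 0 ≤ p.1.getD i 0

/-- The cells of the skew diagram `λ∖μ`. -/
def skewCells (p : List ℕ × List ℕ) : Finset (ℕ × ℕ) := cells p.1 \ cells p.2

/-- The content `c(u) = i − j` of the cell `u = (i,j)`. -/
def content (u : ℕ × ℕ) : ℤ := (u.1 : ℤ) - (u.2 : ℤ)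

/-- The disjoint union of the cells of a tuple of skew diagrams. -/
abbrev TDom {k : ℕ} (ν : Fin k → List ℕ × List ℕ) : Type :=
  Σ i : Fin k, {u // u ∈ skewCells (ν i)}

/-- `f` (with `f ⟨i,u⟩` the entry of the `i`-th tableau at the cell `u`) is a
tuple of semistandard Young tableaux: entries weakly increasing along each row
and strictly increasing up each column. -/
def IsSSYTtuple {k : ℕ} (ν : Fin k → List ℕ × List ℕ) (f : TDom ν → ℕ) : Prop :=
  ∀ i : Fin k, ∀ u v : {u // u ∈ skewCells (ν i)},
    (u.1.1 = v.1.1 ∧ u.1.2 ≤ v.1.2 → f ⟨i, u⟩ ≤ f ⟨i, v⟩) ∧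
    (u.1.2 = v.1.2 ∧ u.1.1 < v.1.1 → f ⟨i, u⟩ < f ⟨i, v⟩)

instance {k : ℕ} (ν : Fin k → List ℕ × List ℕ) (f : TDom ν → ℕ) :
    Decidable (IsSSYTtuple ν f) := by unfold IsSSYTtuple; infer_instance

/-- The number of inversions of a tuple of tableaux: pairs of entries
`T^(i)(u) > T^(j)(v)` with either `i < j` and `c(u) = c(v)`, or `i > j` and
`c(u) = c(v) + 1`. -/
def lltInv {k : ℕ} (ν : Fin k → List ℕ × List ℕ) (f : TDom ν → ℕ) : ℕ :=
  (Finset.univ.filter fun p : TDom ν × TDom ν =>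
    ((p.1.1 < p.2.1 ∧ content p.1.2.1 = content p.2.2.1) ∨
     (p.2.1 < p.1.1 ∧ content p.1.2.1 = content p.2.2.1 + 1)) ∧
    f p.2 < f p.1).card

/-- The LLT polynomial `G_ν(x_1,…,x_N;q) = Σ_T q^{inv(T)} x^T` in `N`
variables, with coefficients in `ℤ[q]` (`q = C Polynomial.X`); tableau entries
in `{1,…,N}` are encoded by `Fin N` (value `k` means entry `k + 1`). -/
noncomputable def llt {k : ℕ} (ν : Fin k → List ℕ × List ℕ) (N : ℕ) :
    MvPolynomial (Fin N) (Polynomial ℤ) :=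
  ∑ f ∈ Finset.univ.filter (fun f : TDom ν → Fin N =>
      IsSSYTtuple ν (fun a => (f a).val + 1)),
    C (Polynomial.X ^ lltInv ν (fun a => (f a).val + 1)) * ∏ a, X (f a)

/-! ### The super alphabet -/

/-- The super alphabet `A = {1, 1̄, 2, 2̄, …}`: the letter `(a, b)` has absolute
value `a + 1` and is negative (barred) iff `b = true`. -/
abbrev SLetter : Type := ℕ × Bool

/-- The absolute value of a super letter. -/
def sAbs (x : SLetter) : ℕ := x.1 + 1

/-- The ordering `<₁`: `1 < 1̄ < 2 < 2̄ < ⋯`. -/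
def lt1 (x y : SLetter) : Prop :=
  x.1 < y.1 ∨ (x.1 = y.1 ∧ x.2 = false ∧ y.2 = true)

instance : DecidableRel lt1 := fun _ _ => by unfold lt1; infer_instance

/-- The ordering `<₂`: `1 < 2 < 3 < ⋯ < 3̄ < 2̄ < 1̄`. -/
def lt2 (x y : SLetter) : Prop :=
  (x.2 = false ∧ y.2 = false ∧ x.1 < y.1) ∨ (x.2 = false ∧ y.2 = true) ∨
    (x.2 = true ∧ y.2 = true ∧ y.1 < x.1)

instance : DecidableRel lt2 := fun _ _ => by unfold lt2; infer_instance

/-- Given a total order `lt` on the super alphabet, `IndOf lt x y` holds iff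
`I(x,y) = 1`, i.e. `x > y`, or `x = y` is a negative letter. -/
def IndOf (lt : SLetter → SLetter → Prop) (x y : SLetter) : Prop :=
  lt y x ∨ (x = y ∧ x.2 = true)

instance (lt : SLetter → SLetter → Prop) [DecidableRel lt] : DecidableRel (IndOf lt) :=
  fun _ _ => by unfold IndOf; infer_instance

/-- A super filling of `dg(μ)` with letters of absolute value at most `N`, as a
total function (the value `(a, b)` with `a : Fin N` means the letter of
absolute value `a + 1`, barred iff `b`). -/
def superFill (μ : List ℕ) {N : ℕ} (f : {u // u ∈ cells μ} → Fin N × Bool) :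
    ℕ × ℕ → SLetter :=
  extendF μ (0, false) fun u => ((f u).1.val, (f u).2)

/-- A super filling with entries in `{1, 1̄}` (`f u = true` means entry `1̄`). -/
def boolFill (μ : List ℕ) (f : {u // u ∈ cells μ} → Bool) : ℕ × ℕ → SLetter :=
  extendF μ (0, false) fun u => ((0 : ℕ), f u)

/-- `m(σ)`: the number of negative entries of a super filling. -/
def negCount (μ : List ℕ) (σ : ℕ × ℕ → SLetter) : ℕ :=
  ((cells μ).filter fun u => (σ u).2 = true).card

/-- `p(σ)`: the number of positive entries of a super filling. -/
def posCount (μ : List ℕ) (σ : ℕ × ℕ → SLetter) : ℕ :=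
  ((cells μ).filter fun u => (σ u).2 = false).card

/-- A super filling is non-attacking if entries in attacking cells have
distinct absolute values. -/
def NonAttacking (μ : List ℕ) (σ : ℕ × ℕ → SLetter) : Prop :=
  ∀ u ∈ cells μ, ∀ v ∈ cells μ, Attack u v → sAbs (σ u) ≠ sAbs (σ v)

instance (μ : List ℕ) (σ : ℕ × ℕ → SLetter) : Decidable (NonAttacking μ σ) := by
  unfold NonAttacking; infer_instance

/-! ### Conjugate partitions, ribbons, connectivity -/

/-- `conj μ j = μ'_j`, the number of rows of `μ` of length at least `j`. -/
def conj (μ : List ℕ) (j : ℕ) : ℕ :=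
  ((Finset.range μ.length).filter fun i => j ≤ μ.getD i 0).card

/-- The transpose `μ'` of a partition, as a list. -/
def conjList (μ : List ℕ) : List ℕ :=
  (List.range (μ.foldr max 0)).map fun j => conj μ (j + 1)

/-- Transpose of a skew shape: `λ∖μ ↦ λ'∖μ'`. -/
def transposePair (p : List ℕ × List ℕ) : List ℕ × List ℕ :=
  (conjList p.1, conjList p.2)

/-- Two cells are adjacent (share an edge). -/
def AdjCell (u v : ℕ × ℕ) : Prop :=
  (u.1 = v.1 ∧ (u.2 = v.2 + 1 ∨ v.2 = u.2 + 1)) ∨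
  (u.2 = v.2 ∧ (u.1 = v.1 + 1 ∨ v.1 = u.1 + 1))

/-- A set of cells is connected (any two cells are joined by a path of
edge-adjacent cells inside the set). -/
def ConnSet (s : Finset (ℕ × ℕ)) : Prop :=
  ∀ u ∈ s, ∀ v ∈ s, Relation.ReflTransGen (fun a b => a ∈ s ∧ b ∈ s ∧ AdjCell a b) u v

/-- A set of cells contains no 2×2 block. -/
def No2x2 (s : Finset (ℕ × ℕ)) : Prop :=
  ¬ ∃ i j, (i, j) ∈ s ∧ (i + 1, j) ∈ s ∧ (i, j + 1) ∈ s ∧ (i + 1, j + 1) ∈ s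

/-! ### Reading words and cocharge -/

/-- Boolean comparison realizing the reading order. -/
def readLe (u v : ℕ × ℕ) : Bool :=
  decide (v.1 < u.1) || (decide (u.1 = v.1) && decide (u.2 ≤ v.2))

/-- The reading word of a filling `σ` of `dg(μ)`: its entries listed in reading
order. -/
noncomputable def readingWord (μ : List ℕ) (σ : ℕ × ℕ → ℕ) : List ℕ :=
  ((cells μ).toList.mergeSort readLe).map σ

/-- Boolean comparison for the cocharge-word ordering of the cells: entries of
`σ` decreasing and, within constant segments of `σ`, cells in decreasing
reading order. -/
def cwordLe (σ : ℕ × ℕ → ℕ) (u v : ℕ × ℕ) : Bool :=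
  decide (σ v < σ u) ||
    (decide (σ u = σ v) &&
      (decide (u.1 < v.1) || (decide (u.1 = v.1) && decide (v.2 ≤ u.2))))

/-- The cocharge word of a filling: the row indices of the cells, listed so that
the entries are decreasing, with ties broken by decreasing reading order. -/
noncomputable def cword (μ : List ℕ) (σ : ℕ × ℕ → ℕ) : List ℕ :=
  ((cells μ).toList.mergeSort (cwordLe σ)).map Prod.fst

/-- Cocharge of a word that is a permutation of `{1,…,n}`:
`Σ_{i ∈ D(w⁻¹)} (n − i)`, where `i ∈ D(w⁻¹)` iff `i + 1` occurs before `i`. -/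
def cochargePerm (w : List ℕ) : ℕ :=
  ∑ i ∈ Finset.Icc 1 (w.length - 1),
    if w.idxOf (i + 1) < w.idxOf i then w.length - i else 0

/-- The (0-based) positions of the letter `a` in `w`. -/
def letterPositions (w : List ℕ) (a : ℕ) : Finset ℕ :=
  (Finset.range w.length).filter fun k => w.getD k 0 = a

/-- The position `k_i` for the letter `a`: the rightmost occurrence of `a`
strictly to the left of `bound` if there is one, otherwise the rightmost
occurrence of `a`. -/
def choosePos (w : List ℕ) (a : ℕ) (bound : Option ℕ) : Option ℕ :=
  match bound with
  | none => (letterPositions w a).max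
  | some b =>
      let s := (letterPositions w a).filter (· < b)
      if s.Nonempty then s.max else (letterPositions w a).max

/-- `posListAux w i = [k_i, k_{i-1}, …, k_1]` (as options). -/
def posListAux (w : List ℕ) : ℕ → List (Option ℕ)
  | 0 => []
  | i + 1 =>
      let rest := posListAux w i
      choosePos w (i + 1) (rest.headD none) :: rest

/-- The set `S = {k_1, …, k_l}` of positions extracted in the cocharge
recursion, where `l` is the largest letter of `w`. -/
def extractSet (w : List ℕ) : Finset ℕ :=
  ((posListAux w (w.foldr max 0)).filterMap id).toFinset

/-- The subword of `w` at the positions in `S` (in increasing position order). -/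
def subwordOn (w : List ℕ) (S : Finset ℕ) : List ℕ :=
  ((List.range w.length).filter fun k => decide (k ∈ S)).map fun k => w.getD k 0

/-- The subword of `w` at the positions *not* in `S`. -/
def subwordOff (w : List ℕ) (S : Finset ℕ) : List ℕ :=
  ((List.range w.length).filter fun k => decide (k ∉ S)).map fun k => w.getD k 0

/-- Fuelled cocharge recursion: `cocharge w = cocharge y + cocharge z`, where
`y` is the extracted subword (a permutation of `{1,…,l}`) and `z` is the
complementary subword. -/
def cochargeAux : ℕ → List ℕ → ℕ
  | 0, _ => 0
  | fuel + 1, w =>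
      let S := extractSet w
      let z := subwordOff w S
      if z.length < w.length then cochargePerm (subwordOn w S) + cochargeAux fuel z
      else cochargePerm (subwordOn w S)

/-- The cocharge of a word of partition content. -/
def cocharge (w : List ℕ) : ℕ := cochargeAux w.length w

/-! ### Yamanouchi words and crystal operators -/

/-- A word is Yamanouchi if every final segment contains at least as many
letters `i` as letters `i + 1`, for every `i ≥ 1`. -/
def IsYamanouchi (w : List ℕ) : Prop :=
  ∀ k i, ((w.drop k).count (i + 2)) ≤ ((w.drop k).count (i + 1))

noncomputable instance : DecidablePred IsYamanouchi := fun _ => Classical.propDecidable _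

/-- The letters `i` (close, `false`) and `i + 1` (open, `true`) of `w`, as a
list of (position, is-open) tokens in position order. -/
def tokens (i : ℕ) (w : List ℕ) : List (ℕ × Bool) :=
  (List.range w.length).filterMap fun k =>
    if w.getD k 0 = i + 1 then some (k, true)
    else if w.getD k 0 = i then some (k, false) else none

/-- Stack pass performing the repeated deletion of adjacent matched pairs (an
`i + 1` immediately followed by an `i` in the current subword). The first
argument is the (reversed) list of surviving tokens so far. -/
def reduceTokens : List (ℕ × Bool) → List (ℕ × Bool) → List (ℕ × Bool)
  | acc, [] => acc.reverse
  | a :: acc', t :: rest =>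
      if a.2 ∧ ¬ t.2 then reduceTokens acc' rest
      else reduceTokens (t :: a :: acc') rest
  | [], t :: rest => reduceTokens [t] rest

/-- The surviving letters of `{i, i + 1}` in `w` after matched-pair deletion. -/
def survivors (i : ℕ) (w : List ℕ) : List (ℕ × Bool) := reduceTokens [] (tokens i w)

/-- The crystal raising operator `E_i` on words: change the first surviving
(unmatched) letter `i + 1` to `i`; `none` encodes `E_i w = 0`. -/
def crystalE (i : ℕ) (w : List ℕ) : Option (List ℕ) :=
  match (survivors i w).find? (fun t => t.2) with
  | none => none
  | some t => some (w.set t.1 i)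

/-! ### Straight-shape tableaux and Schur polynomials -/

/-- Semistandard tableau condition for a filling of the cells of `lam`. -/
def IsSSYTcells (lam : List ℕ) (T : {u // u ∈ cells lam} → ℕ) : Prop :=
  ∀ u v : {u // u ∈ cells lam},
    (u.1.1 = v.1.1 ∧ u.1.2 ≤ v.1.2 → T u ≤ T v) ∧
    (u.1.2 = v.1.2 ∧ u.1.1 < v.1.1 → T u < T v)

instance (lam : List ℕ) (T : {u // u ∈ cells lam} → ℕ) :
    Decidable (IsSSYTcells lam T) := by unfold IsSSYTcells; infer_instance

/-- The Schur polynomial `s_λ(x_1,…,x_N) = Σ_{T ∈ SSYT(λ), entries ≤ N} x^T`,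
with coefficients in a commutative ring `R`. -/
noncomputable def schurPoly (R : Type) [CommRing R] (lam : List ℕ) (N : ℕ) :
    MvPolynomial (Fin N) R :=
  ∑ T ∈ Finset.univ.filter (fun T : {u // u ∈ cells lam} → Fin N =>
      IsSSYTcells lam (fun u => (T u).val + 1)),
    ∏ u, X (T u)

/-- The decreasing list of parts of `p : Nat.Partition n`. -/
def partnList {n : ℕ} (p : n.Partition) : List ℕ :=
  (Multiset.sort p.parts (· ≤ ·)).reverse

/-! Both sides have one monomial per cell of `dg(μ)`, and an involution of `dg(μ)` matches
them: reversing the first row, `(1, j) ↦ (1, μ_1 + 1 - j)`, turns `q^{arm}` into `q^{j-1}`,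
and reversing column `j` above the first row, `(i, j) ↦ (μ'_j + 2 - i, j)`, turns
`t^{leg+1}` into `t^{i-1}`. -/

lemma getD_le_foldr_max (μ : List ℕ) (i : ℕ) : μ.getD i 0 ≤ μ.foldr max 0 := by
  rcases lt_or_ge i μ.length with hi | hi
  · rw [List.getD_eq_getElem _ _ hi]
    exact List.le_max_of_le' 0 (List.getElem_mem hi) le_rfl
  · rw [List.getD_eq_default _ _ hi]
    exact Nat.zero_le _

lemma mem_cells_iff {μ : List ℕ} {u : ℕ × ℕ} :
    u ∈ cells μ ↔ 1 ≤ u.1 ∧ u.1 ≤ μ.length ∧ 1 ≤ u.2 ∧ u.2 ≤ μ.getD (u.1 - 1) 0 := by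
  simp only [cells, Finset.mem_filter, Finset.mem_product, Finset.mem_Icc]
  have := getD_le_foldr_max μ (u.1 - 1)
  constructor
  · rintro ⟨⟨⟨h1, h2⟩, h3, -⟩, h4⟩
    exact ⟨h1, h2, h3, h4⟩
  · rintro ⟨h1, h2, h3, h4⟩
    exact ⟨⟨⟨h1, h2⟩, h3, h4.trans this⟩, h4⟩

lemma conj_le_length (μ : List ℕ) (j : ℕ) : conj μ j ≤ μ.length :=
  (Finset.card_filter_le _ _).trans (Finset.card_range _).le

lemma mem_iff_lt_card_of_isLowerSet {s : Finset ℕ} (hs : IsLowerSet (s : Set ℕ)) (i : ℕ) :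
    i ∈ s ↔ i < s.card := by
  obtain h | ⟨a, ha⟩ := hs.eq_univ_or_Iio
  · exact absurd (h ▸ s.finite_toSet) Set.infinite_univ
  · have hrange : s = Finset.range a := by
      ext k
      simpa using Set.ext_iff.mp ha k
    simp [hrange]

namespace IsPartitionList

variable {μ : List ℕ}

lemma antitone_getD (hμ : IsPartitionList μ) : Antitone (μ.getD · 0) := by
  intro i i' h
  rcases lt_or_ge i' μ.length with h' | h'
  · have hi : i < μ.length := h.trans_lt h'
    simp only [List.getD_eq_getElem _ _ h', List.getD_eq_getElem _ _ hi]
    rcases h.eq_or_lt with rfl | hlt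
    · exact le_rfl
    · exact hμ.1.rel_get_of_lt (a := ⟨i, hi⟩) (b := ⟨i', h'⟩) hlt
  · simp only [List.getD_eq_default _ _ h', Nat.zero_le]

lemma lt_conj_iff (hμ : IsPartitionList μ) (j i : ℕ) : i < conj μ j ↔ i < μ.length ∧ j ≤ μ.getD i 0 := by
  have hlower : IsLowerSet
      (((Finset.range μ.length).filter fun i => j ≤ μ.getD i 0 : Finset ℕ) : Set ℕ) := by
    intro k k' hk hk'
    simp only [Finset.coe_filter, Finset.mem_range, Set.mem_ofPred_eq] at hk' ⊢
    exact ⟨hk.trans_lt hk'.1, hk'.2.trans (hμ.antitone_getD hk)⟩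
  rw [conj, ← mem_iff_lt_card_of_isLowerSet hlower]
  simp

lemma mem_cells_iff_le_conj (hμ : IsPartitionList μ) {u : ℕ × ℕ} :
    u ∈ cells μ ↔ 1 ≤ u.1 ∧ 1 ≤ u.2 ∧ u.1 ≤ conj μ u.2 := by
  have := hμ.lt_conj_iff u.2 (u.1 - 1)
  have := conj_le_length μ u.2
  rw [mem_cells_iff]
  omega

lemma leg_eq (hμ : IsPartitionList μ) {u : ℕ × ℕ} (hj : 1 ≤ u.2) : leg μ u = conj μ u.2 - u.1 := by
  have hcol : (cells μ).filter (fun v => v.2 = u.2 ∧ u.1 < v.1)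
      = (Finset.Ioc u.1 (conj μ u.2)).image (fun i => (i, u.2)) := by
    ext ⟨i, j⟩
    simp only [Finset.mem_filter, Finset.mem_image, Finset.mem_Ioc, Prod.mk.injEq,
      hμ.mem_cells_iff_le_conj]
    constructor
    · rintro ⟨⟨-, -, hi⟩, rfl, hui⟩
      exact ⟨i, ⟨hui, hi⟩, rfl, rfl⟩
    · rintro ⟨i, ⟨hui, hi⟩, rfl, rfl⟩
      exact ⟨⟨by omega, hj, hi⟩, rfl, hui⟩
  rw [leg, hcol, Finset.card_image_of_injective _ (Prod.mk_left_injective u.2),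
    Nat.card_Ioc]

end IsPartitionList

lemma arm_eq {μ : List ℕ} {u : ℕ × ℕ} (hi : 1 ≤ u.1) :
    arm μ u = μ.getD (u.1 - 1) 0 - u.2 := by
  have hrow : (cells μ).filter (fun v => v.1 = u.1 ∧ u.2 < v.2)
      = (Finset.Ioc u.2 (μ.getD (u.1 - 1) 0)).image (fun j => (u.1, j)) := by
    ext ⟨i, j⟩
    simp only [Finset.mem_filter, Finset.mem_image, Finset.mem_Ioc, Prod.mk.injEq,
      mem_cells_iff]
    constructor
    · rintro ⟨⟨-, -, -, hj⟩, rfl, huj⟩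
      exact ⟨j, ⟨huj, hj⟩, rfl, rfl⟩
    · rintro ⟨j, ⟨huj, hj⟩, rfl, rfl⟩
      have : u.1 - 1 < μ.length := by
        by_contra! h
        rw [List.getD_eq_default _ _ h] at hj
        omega
      exact ⟨⟨hi, by omega, by omega, hj⟩, rfl, huj⟩
  rw [arm, hrow, Finset.card_image_of_injective _ (Prod.mk_right_injective u.1),
    Nat.card_Ioc]

def reflectCell (μ : List ℕ) (u : ℕ × ℕ) : ℕ × ℕ :=
  if u.1 = 1 then (1, μ.getD 0 0 + 1 - u.2) else (conj μ u.2 + 2 - u.1, u.2)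

section Reflect

variable {μ : List ℕ} {u : ℕ × ℕ}

lemma reflectCell_of_row_eq_one (h : u.1 = 1) : reflectCell μ u = (1, μ.getD 0 0 + 1 - u.2) :=
  if_pos h

lemma reflectCell_of_row_ne_one (h : u.1 ≠ 1) : reflectCell μ u = (conj μ u.2 + 2 - u.1, u.2) :=
  if_neg h

lemma reflectCell_mem (hμ : IsPartitionList μ) (hu : u ∈ cells μ) : reflectCell μ u ∈ cells μ := by
  by_cases h : u.1 = 1
  · rw [mem_cells_iff, h, Nat.sub_self] at hu
    rw [reflectCell_of_row_eq_one h, mem_cells_iff]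
    exact ⟨le_rfl, hu.2.1, by omega, by simp only [Nat.sub_self]; omega⟩
  · rw [hμ.mem_cells_iff_le_conj] at hu
    rw [reflectCell_of_row_ne_one h, hμ.mem_cells_iff_le_conj]
    dsimp only
    omega

lemma reflectCell_reflectCell (hμ : IsPartitionList μ) (hu : u ∈ cells μ) :
    reflectCell μ (reflectCell μ u) = u := by
  by_cases h : u.1 = 1
  · rw [mem_cells_iff, h, Nat.sub_self] at hu
    rw [reflectCell_of_row_eq_one h, reflectCell_of_row_eq_one rfl]
    exact Prod.ext h.symm (by dsimp only; omega)
  · rw [hμ.mem_cells_iff_le_conj] at hu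
    rw [reflectCell_of_row_ne_one h, reflectCell_of_row_ne_one (by dsimp only; omega)]
    exact Prod.ext (by dsimp only; omega) rfl

end Reflect

section Weight

variable {R : Type*} [CommSemiring R] (μ : List ℕ) (q t : R)

def cellWeight (u : ℕ × ℕ) : R :=
  if u.1 = 1 then q ^ arm μ u else t ^ (leg μ u + 1) * q ^ (u.2 - 1)

variable {μ}

lemma cellWeight_eq_reflectCell (hμ : IsPartitionList μ) {u : ℕ × ℕ} (hu : u ∈ cells μ) :
    cellWeight μ q t u = t ^ ((reflectCell μ u).1 - 1) * q ^ ((reflectCell μ u).2 - 1) := by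
  by_cases h : u.1 = 1
  · rw [mem_cells_iff, h, Nat.sub_self] at hu
    rw [cellWeight, if_pos h, reflectCell_of_row_eq_one h, arm_eq h.ge, h]
    simp only [Nat.sub_self, pow_zero, one_mul]
    congr 1
    omega
  · rw [hμ.mem_cells_iff_le_conj] at hu
    rw [cellWeight, if_neg h, reflectCell_of_row_ne_one h, hμ.leg_eq hu.2.1]
    congr 2
    omega

theorem sum_cellWeight (hμ : IsPartitionList μ) :
    ∑ u ∈ cells μ, cellWeight μ q t u = ∑ u ∈ cells μ, t ^ (u.1 - 1) * q ^ (u.2 - 1) :=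
  Finset.sum_nbij' (reflectCell μ) (reflectCell μ) (fun _ => reflectCell_mem hμ)
    (fun _ => reflectCell_mem hμ) (fun _ => reflectCell_reflectCell hμ)
    (fun _ => reflectCell_reflectCell hμ) (fun _ => cellWeight_eq_reflectCell q t hμ)

end Weight

/-- For `u = (i,j) ∈ dg(μ)` let `L(u) = t^{leg(u)+1} q^{j−1}`
if `i ≠ 1` and `L(u) = q^{arm(u)}` if `i = 1`.  Then
`Σ_{u ∈ dg(μ)} L(u) = Σ_{(i,j) ∈ dg(μ)} t^{i−1} q^{j−1}` as polynomials in `q`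
and `t` (here `q = X 0`, `t = X 1`). -/
theorem L_sum_eq_Bmu (μ : List ℕ) (hμ : IsPartitionList μ) :
    ∑ u ∈ cells μ,
      (if u.1 = 1 then (X 0 : MvPolynomial (Fin 2) ℤ) ^ arm μ u
       else (X 1 : MvPolynomial (Fin 2) ℤ) ^ (leg μ u + 1) *
              (X 0 : MvPolynomial (Fin 2) ℤ) ^ (u.2 - 1))
    = ∑ u ∈ cells μ,
        (X 1 : MvPolynomial (Fin 2) ℤ) ^ (u.1 - 1) *
          (X 0 : MvPolynomial (Fin 2) ℤ) ^ (u.2 - 1) :=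
  sum_cellWeight (X 0) (X 1) hμ

end HHL
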